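/- Let |X| = pq with p, q prime and p ≥ 3. Then Fact X is isomorphic to MO_n where n = (pq)!/(p!q!) if p ≠ q and n = (pq)!/(2·p!·q!) if p = q. -/

import Mathlib

/-- A pair `(θ, φ)` of equivalence relations on `X` is a factor pair if the natural map
`X → X/θ × X/φ` is a bijection. -/
def IsFactorPair {X : Type*} (θ φ : Setoid X) : Prop :=
  Function.Bijective (fun x : X => (Quotient.mk θ x, Quotient.mk φ x))

/-- The elements of `Fact X`: factor pairs of `X`. -/
def FactorPair (X : Type*) : Type _ := {p : Setoid X × Setoid X // IsFactorPair p.1 p.2}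

/-- Two equivalence relations permute if their relational compositions agree. -/
def Permutes {X : Type*} (θ ψ : Setoid X) : Prop :=
  ∀ x z : X, (∃ y, θ.r x y ∧ ψ.r y z) ↔ (∃ y, ψ.r x y ∧ θ.r y z)

/-- The partial order of `Fact X`: `(θ₁,θ₂) ≤ (ψ₁,ψ₂)` iff `θ₁ ⊆ ψ₁`, `ψ₂ ⊆ θ₂`,
and `θ₁` permutes with `ψ₂`. -/
def FactorPair.le {X : Type*} (p q : FactorPair X) : Prop :=
  p.1.1 ≤ q.1.1 ∧ q.1.2 ≤ p.1.2 ∧ Permutes p.1.1 q.1.2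

/-- The orthocomplementation of `Fact X`: `(θ₁,θ₂)' = (θ₂,θ₁)`. -/
def FactorPair.perp {X : Type*} (p : FactorPair X) : FactorPair X :=
  ⟨(p.1.2, p.1.1), by
    have h := p.2
    exact ((Equiv.prodComm _ _).bijective).comp h⟩

/-- The orthomodular poset `MO n`: bottom, top, and `2n` middle elements forming `n`
orthocomplementary pairs. -/
inductive MO (n : ℕ) : Type
  | bot : MO n
  | top : MO n
  | atom : Fin n → MO n
  | coatom : Fin n → MO n

/-- The order of `MO n`. -/
def MO.le {n : ℕ} : MO n → MO n → Prop
  | .bot, _ => True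
  | _, .top => True
  | .atom i, .atom j => i = j
  | .coatom i, .coatom j => i = j
  | _, _ => False

/-- The orthocomplementation of `MO n`. -/
def MO.perp {n : ℕ} : MO n → MO n
  | .bot => .top
  | .top => .bot
  | .atom i => .coatom i
  | .coatom i => .atom i

/-! A factor pair `(θ₁, θ₂)` satisfies `|X/θ₁| · |X/θ₂| = |X| = pq`, so apart from `(⊥, ⊤)` and
`(⊤, ⊥)` both quotients have prime size. Every `θ₁`-class meets every `θ₂`-class exactly once, so
`θ₁ ≤ ψ₁` forces `|X/θ₂|` to divide `|X/ψ₂|`; for primes this means equality, hence the remaining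
factor pairs form an antichain, permuted by the fixed-point-free involution `'`, and `Fact X ≅ MO n`
where `2n` is their number. A factor pair with `|X/θ₁| = m`, `mk = |X|`, comes from exactly `m! k!`
of the `(mk)!` bijections `X ≃ m × k`; so for `p ≠ q` there are `2 (pq)!/(p! q!)` middle elements,
for `p = q` only `(p²)!/(p!)²`. -/

open Function

namespace Setoid

variable {X : Type*}

instance finite [Finite X] : Finite (Setoid X) :=
  Finite.of_injective (fun s : Setoid X => ⇑s) fun _ _ h =>
    Setoid.ext fun a b => iff_of_eq (congrFun₂ h a b)

theorem card_quotient_eq_one_iff [Nonempty X] (s : Setoid X) :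
    Nat.card (Quotient s) = 1 ↔ s = ⊤ := by
  rw [Nat.card_eq_one_iff_unique, ← Quotient.subsingleton_iff]
  exact and_iff_left (Nonempty.map (Quotient.mk s) ‹_›)

theorem eq_bot_iff_card_quotient [Finite X] (s : Setoid X) :
    s = ⊥ ↔ Nat.card (Quotient s) = Nat.card X := by
  constructor
  · rintro rfl
    exact (Nat.card_eq_of_bijective _
      ⟨fun _ _ h => Quotient.exact h, Quotient.mk_surjective⟩).symm
  · intro h
    have hbij := (Nat.bijective_iff_surjective_and_card _).2 ⟨Quotient.mk_surjective, h.symm⟩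
    exact le_bot_iff.1 fun _ _ hab => hbij.1 (Quotient.sound hab)

theorem eq_of_le_of_card_quotient_eq [Finite X] {s t : Setoid X} (h : s ≤ t)
    (hc : Nat.card (Quotient s) = Nat.card (Quotient t)) : s = t := by
  let g : Quotient s → Quotient t :=
    Quotient.lift (Quotient.mk t) fun _ _ hab => Quotient.sound (h hab)
  have hg : Bijective g := (Nat.bijective_iff_surjective_and_card g).2
    ⟨fun u => u.inductionOn fun x => ⟨Quotient.mk s x, rfl⟩, hc⟩
  exact le_antisymm h fun a b hab =>
    Quotient.exact (hg.1 (Quotient.sound hab : g ⟦a⟧ = g ⟦b⟧))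

end Setoid

theorem Nat.dvd_prime_mul_prime_iff {p q d : ℕ} (hp : p.Prime) (hq : q.Prime) :
    d ∣ p * q ↔ d = 1 ∨ d = p ∨ d = q ∨ d = p * q := by
  constructor
  · intro hd
    obtain ⟨a, b, ha, hb, rfl⟩ := dvd_mul.1 hd
    rcases (Nat.dvd_prime hp).1 ha with rfl | rfl <;>
      rcases (Nat.dvd_prime hq).1 hb with rfl | rfl <;> simp
  · rintro (rfl | rfl | rfl | rfl)
    exacts [one_dvd _, dvd_mul_right _ _, dvd_mul_left _ _, dvd_rfl]

theorem Function.Involutive.exists_equiv_prod_bool {α : Type*} [Finite α] {f : α → α}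
    (hf : Involutive f) (hfix : ∀ x, f x ≠ x) :
    ∃ e : α ≃ Fin (Nat.card α / 2) × Bool, ∀ x, e (f x) = ((e x).1, !(e x).2) := by
  classical
  -- the orbit relation of `f`
  let s : Setoid α := Setoid.ker fun x => ({x, f x} : Set α)
  have mk_f (x : α) : Quotient.mk s (f x) = Quotient.mk s x :=
    Quotient.sound (by simp [s, Setoid.ker_def, hf x, Set.pair_comm])
  have out_eq (x : α) : (Quotient.mk s x).out = x ∨ (Quotient.mk s x).out = f x := by
    have h : ({_, _} : Set α) = {_, _} := Quotient.exact (Quotient.out_eq (Quotient.mk s x))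
    rcases Set.pair_eq_pair_iff.1 h with ⟨h1, -⟩ | ⟨h1, -⟩
    exacts [Or.inl h1, Or.inr h1]
  let g (x : α) : Quotient s × Bool := (Quotient.mk s x, decide (x = (Quotient.mk s x).out))
  have hg (x : α) : g (f x) = ((g x).1, !(g x).2) := by
    simp only [g, mk_f, Prod.mk.injEq, true_and]
    rcases out_eq x with h | h <;> rw [h]
    · simp [hfix x]
    · simp [(hfix x).symm]
  have hbij : Bijective g := by
    refine ⟨fun x y hxy => ?_, fun ⟨c, b⟩ => ?_⟩
    · have h : ({x, f x} : Set α) = {y, f y} := Quotient.exact (congrArg Prod.fst hxy)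
      rcases Set.pair_eq_pair_iff.1 h with ⟨h1, -⟩ | ⟨h1, -⟩
      · exact h1
      · have h := congrArg Prod.snd (hg y)
        rw [← h1, hxy] at h
        simp at h
    · have hout : g c.out = (c, true) := by simp [g]
      cases b
      · exact ⟨f c.out, by rw [hg, hout]; rfl⟩
      · exact ⟨c.out, hout⟩
  have hcard : Nat.card (Quotient s) = Nat.card α / 2 := by
    rw [Nat.card_congr (Equiv.ofBijective g hbij), Nat.card_prod,
      Nat.card_eq_fintype_card (α := Bool), Fintype.card_bool, Nat.mul_div_cancel _ two_pos]
  exact ⟨(Equiv.ofBijective g hbij).trans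
    ((Finite.equivFinOfCardEq hcard).prodCongr (Equiv.refl _)), fun x => by simp [hg]⟩

theorem Nat.card_equiv_of_card_eq {α β : Type*} [Finite α] [Finite β]
    (h : Nat.card α = Nat.card β) : Nat.card (α ≃ β) = (Nat.card β).factorial := by
  classical
  have : Fintype β := Fintype.ofFinite β
  let e : α ≃ β := (Finite.equivFinOfCardEq h).trans (Finite.equivFin β).symm
  rw [Nat.card_congr (e.equivCongr (Equiv.refl β)), Nat.card_eq_fintype_card, Fintype.card_perm,
    Nat.card_eq_fintype_card]

namespace MO

variable {n : ℕ}

def ofProd : Fin n × Bool → MO n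
  | (i, true) => atom i
  | (i, false) => coatom i

theorem perp_ofProd (v : Fin n × Bool) : (ofProd v).perp = ofProd (v.1, !v.2) := by
  obtain ⟨i, _ | _⟩ := v <;> rfl

theorem le_iff {x y : MO n} : x.le y ↔ x = bot ∨ y = top ∨ x = y := by
  cases x <;> cases y <;> simp [MO.le]

theorem exists_equiv_of_equiv_middle {P : Type*} {b t : P} (hbt : b ≠ t)
    (e' : {x // x ≠ b ∧ x ≠ t} ≃ Fin n × Bool) :
    ∃ e : P ≃ MO n,
      e b = bot ∧ e t = top ∧ ∀ x : {x // x ≠ b ∧ x ≠ t}, e x = ofProd (e' x) := by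
  classical
  let toMO (x : P) : MO n :=
    if hb : x = b then bot else if ht : x = t then top else ofProd (e' ⟨x, hb, ht⟩)
  let ofMO : MO n → P
    | bot => b
    | top => t
    | atom i => (e'.symm (i, true)).1
    | coatom i => (e'.symm (i, false)).1
  have toMO_bot : toMO b = bot := by simp [toMO]
  have toMO_top : toMO t = top := by simp [toMO, hbt.symm]
  have toMO_mid (x : {x // x ≠ b ∧ x ≠ t}) : toMO x = ofProd (e' x) := by
    simp [toMO, x.2.1, x.2.2]
  have ofMO_ofProd (v) : ofMO (ofProd v) = (e'.symm v).1 := by obtain ⟨i, _ | _⟩ := v <;> rfl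
  have left_inv (x : P) : ofMO (toMO x) = x := by
    by_cases hb : x = b
    · rw [hb, toMO_bot]
    by_cases ht : x = t
    · rw [ht, toMO_top]
    rw [toMO_mid ⟨x, hb, ht⟩, ofMO_ofProd, e'.symm_apply_apply]
  have right_inv (y : MO n) : toMO (ofMO y) = y := by
    cases y with
    | bot => exact toMO_bot
    | top => exact toMO_top
    | atom i => exact (toMO_mid _).trans (congrArg ofProd (e'.apply_symm_apply _))
    | coatom i => exact (toMO_mid _).trans (congrArg ofProd (e'.apply_symm_apply _))
  exact ⟨⟨toMO, ofMO, left_inv, right_inv⟩, toMO_bot, toMO_top, toMO_mid⟩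

theorem exists_equiv {P : Type*} [Finite P] {perp : P → P} (hinv : Involutive perp)
    (hfix : ∀ x, perp x ≠ x) (b : P) :
    ∃ e : P ≃ MO (Nat.card {x // x ≠ b ∧ x ≠ perp b} / 2),
      e b = bot ∧ e (perp b) = top ∧ ∀ x, e (perp x) = (e x).perp := by
  let M := {x // x ≠ b ∧ x ≠ perp b}
  have hM (x : M) : perp x.1 ≠ b ∧ perp x.1 ≠ perp b :=
    ⟨fun h => x.2.2 ((hinv x.1).symm.trans (congrArg perp h)),
      fun h => x.2.1 (hinv.injective h)⟩
  obtain ⟨e', he'⟩ := Involutive.exists_equiv_prod_bool (f := fun x : M => ⟨perp x, hM x⟩)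
    (fun x => Subtype.ext (hinv x)) (fun x h => hfix x (congrArg Subtype.val h))
  obtain ⟨e, he_bot, he_top, he_mid⟩ := exists_equiv_of_equiv_middle (hfix b).symm e'
  refine ⟨e, he_bot, he_top, fun x => ?_⟩
  by_cases hb : x = b
  · rw [hb, he_top, he_bot]; rfl
  by_cases ht : x = perp b
  · rw [ht, hinv b, he_bot, he_top]; rfl
  rw [he_mid ⟨x, hb, ht⟩, perp_ofProd, ← he']
  exact he_mid ⟨perp x, hM ⟨x, hb, ht⟩⟩

end MO

namespace IsFactorPair

variable {X : Type*} {θ φ : Setoid X}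

theorem symm (h : IsFactorPair θ φ) : IsFactorPair φ θ :=
  (Equiv.prodComm _ _).bijective.comp h

theorem eq_of_rel (h : IsFactorPair θ φ) {x y : X} (hθ : θ x y) (hφ : φ x y) : x = y :=
  h.1 (Prod.ext (Quotient.sound hθ) (Quotient.sound hφ))

theorem exists_rel_rel (h : IsFactorPair θ φ) (x z : X) : ∃ y, θ x y ∧ φ y z := by
  obtain ⟨y, hy⟩ := h.2 (⟦x⟧, ⟦z⟧)
  exact ⟨y, θ.symm (Quotient.exact (congrArg Prod.fst hy)),
    Quotient.exact (congrArg Prod.snd hy)⟩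

theorem permutes (h : IsFactorPair θ φ) : Permutes θ φ := fun x z =>
  iff_of_true (h.exists_rel_rel x z) (h.symm.exists_rel_rel x z)

theorem eq_top_of_eq_bot (h : IsFactorPair θ φ) (hθ : θ = ⊥) : φ = ⊤ := by
  refine Setoid.eq_top_iff.2 fun x z => ?_
  obtain ⟨y, hxy, hyz⟩ := h.exists_rel_rel x z
  rw [hθ] at hxy
  exact (show x = y from hxy) ▸ hyz

theorem eq_bot_of_eq_top (h : IsFactorPair θ φ) (hθ : θ = ⊤) : φ = ⊥ :=
  le_bot_iff.1 fun _ _ hxy => h.eq_of_rel (by rw [hθ]; trivial) hxy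

theorem card_mul_card [Finite X] (h : IsFactorPair θ φ) :
    Nat.card (Quotient θ) * Nat.card (Quotient φ) = Nat.card X := by
  rw [← Nat.card_prod]
  exact (Nat.card_eq_of_bijective _ h).symm

theorem card_eq_of_saturated [Finite X] (h : IsFactorPair θ φ) {C : Set X}
    (hC : ∀ x y, θ x y → x ∈ C → y ∈ C) :
    Nat.card C = Nat.card (Quotient.mk θ '' C) * Nat.card (Quotient φ) := by
  rw [← Nat.card_prod]
  refine Nat.card_eq_of_bijective (fun x => (⟨⟦x.1⟧, x.1, x.2, rfl⟩, ⟦x.1⟧))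
    ⟨?_, ?_⟩
  · rintro ⟨x, _⟩ ⟨y, _⟩ hxy
    exact Subtype.ext (h.eq_of_rel (Quotient.exact (congrArg (fun p => p.1.1) hxy))
      (Quotient.exact (congrArg Prod.snd hxy)))
  · rintro ⟨⟨-, x, hx, rfl⟩, u⟩
    obtain ⟨z, rfl⟩ := Quotient.mk_surjective u
    obtain ⟨y, hxy, hyz⟩ := h.exists_rel_rel x z
    exact ⟨⟨y, hC x y hxy hx⟩, Prod.ext (Subtype.ext (Quotient.sound (θ.symm hxy)))
      (Quotient.sound hyz)⟩

/-- A class of the coarser `ψ` is a union of `θ`-classes, each of which meets every `φ`-class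
exactly once; so `|X/φ|` divides the size `|X/χ|` of that class. -/
theorem card_quotient_dvd [Finite X] {ψ χ : Setoid X} (h : IsFactorPair θ φ)
    (h' : IsFactorPair ψ χ) (hle : θ ≤ ψ) :
    Nat.card (Quotient φ) ∣ Nat.card (Quotient χ) := by
  rcases isEmpty_or_nonempty X with hX | ⟨⟨x⟩⟩
  · simp
  let C : Set X := {y | ψ x y}
  have hCψ := h'.card_eq_of_saturated (C := C) fun y z hyz hy => ψ.trans hy hyz
  have hCθ := h.card_eq_of_saturated (C := C) fun y z hyz hy => ψ.trans hy (hle hyz)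
  have himage : Quotient.mk ψ '' C = {⟦x⟧} := by
    ext u
    refine ⟨?_, fun hu => ⟨x, ψ.refl x, hu.symm⟩⟩
    rintro ⟨y, hy, rfl⟩
    exact Quotient.sound (ψ.symm hy)
  rw [himage, Nat.card_unique (α := ({⟦x⟧} : Set _)), one_mul] at hCψ
  exact Dvd.intro_left _ (hCθ.symm.trans hCψ)

end IsFactorPair

namespace FactorPair

variable {X : Type*}

instance finite [Finite X] : Finite (FactorPair X) := Subtype.finite

def bot (X : Type*) : FactorPair X :=
  ⟨(⊥, ⊤), fun _ _ h => Quotient.exact (congrArg Prod.fst h), fun ⟨a, u⟩ =>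
    ⟨a.out, Prod.ext a.out_eq (Quotient.inductionOn u fun _ => Quotient.sound trivial)⟩⟩

abbrev top (X : Type*) : FactorPair X := (bot X).perp

theorem perp_involutive : Involutive (perp : FactorPair X → FactorPair X) := fun _ => rfl

theorem eq_bot_iff {r : FactorPair X} : r = bot X ↔ r.1.1 = ⊥ :=
  ⟨fun h => h ▸ rfl, fun h => Subtype.ext (Prod.ext h (r.2.eq_top_of_eq_bot h))⟩

theorem eq_top_iff {r : FactorPair X} : r = top X ↔ r.1.1 = ⊤ :=
  ⟨fun h => h ▸ rfl, fun h => Subtype.ext (Prod.ext h (r.2.eq_bot_of_eq_top h))⟩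

theorem perp_ne_self [Nontrivial X] (r : FactorPair X) : r.perp ≠ r := by
  intro h
  have hsnd : r.1.2 = r.1.1 := congrArg (fun s => s.1.1) h
  have htop : r.1.1 = ⊤ := Setoid.eq_top_iff.2 fun x z => by
    obtain ⟨y, hxy, hyz⟩ := r.2.exists_rel_rel x z
    exact r.1.1.trans hxy (hsnd ▸ hyz)
  obtain ⟨x, y, hxy⟩ := exists_pair_ne X
  exact hxy (r.2.eq_of_rel (by rw [htop]; trivial) (by rw [hsnd, htop]; trivial))

theorem permutes_bot (ψ : Setoid X) : Permutes ⊥ ψ := fun x z =>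
  ⟨fun ⟨_, hxy, hyz⟩ => ⟨z, hxy ▸ hyz, rfl⟩,
    fun ⟨_, hxy, hyz⟩ => ⟨x, rfl, (hyz : _ = z) ▸ hxy⟩⟩

theorem bot_le (r : FactorPair X) : (bot X).le r :=
  ⟨_root_.bot_le, _root_.le_top, permutes_bot _⟩

theorem le_top (r : FactorPair X) : r.le (top X) :=
  ⟨_root_.le_top, _root_.bot_le, fun x z => (permutes_bot r.1.1 x z).symm⟩

theorem le_refl (r : FactorPair X) : r.le r :=
  ⟨le_rfl, le_rfl, r.2.permutes⟩

theorem eq_top_of_top_le {r : FactorPair X} (h : (top X).le r) : r = top X :=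
  eq_top_iff.2 (top_le_iff.1 h.1)

theorem eq_bot_of_le_bot {r : FactorPair X} (h : r.le (bot X)) : r = bot X :=
  eq_bot_iff.2 (le_bot_iff.1 h.1)

theorem eq_of_le_of_prime [Finite X] {r s : FactorPair X} (h : r.le s)
    (hr : (Nat.card (Quotient r.1.2)).Prime) (hs : (Nat.card (Quotient s.1.2)).Prime) :
    r = s := by
  have h₂ : Nat.card (Quotient r.1.2) = Nat.card (Quotient s.1.2) :=
    (Nat.prime_dvd_prime_iff_eq hr hs).1 (r.2.card_quotient_dvd s.2 h.1)
  have h₁ : Nat.card (Quotient r.1.1) = Nat.card (Quotient s.1.1) := by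
    refine Nat.eq_of_mul_eq_mul_right hr.pos ?_
    rw [r.2.card_mul_card, h₂, s.2.card_mul_card]
  exact Subtype.ext (Prod.ext (Setoid.eq_of_le_of_card_quotient_eq h.1 h₁)
    (Setoid.eq_of_le_of_card_quotient_eq h.2.1 h₂.symm).symm)

noncomputable def equivProd (r : FactorPair X) : X ≃ Quotient r.1.1 × Quotient r.1.2 :=
  Equiv.ofBijective _ r.2

def ofEquiv {A B : Type*} (e : X ≃ A × B) : FactorPair X := by
  refine ⟨(Setoid.ker (Prod.fst ∘ e), Setoid.ker (Prod.snd ∘ e)), fun x y h => ?_,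
    fun ⟨u, v⟩ => ?_⟩
  · exact e.injective (Prod.ext (Quotient.exact (congrArg Prod.fst h))
      (Quotient.exact (congrArg Prod.snd h)))
  · obtain ⟨a, rfl⟩ := Quotient.mk_surjective u
    obtain ⟨b, rfl⟩ := Quotient.mk_surjective v
    exact ⟨e.symm ((e a).1, (e b).2), Prod.ext (Quotient.sound (by simp [Setoid.ker_def]))
      (Quotient.sound (by simp [Setoid.ker_def]))⟩

theorem ofEquiv_equivProd_trans {A B : Type*} (r : FactorPair X) (α : Quotient r.1.1 ≃ A)
    (β : Quotient r.1.2 ≃ B) : ofEquiv (r.equivProd.trans (α.prodCongr β)) = r :=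
  Subtype.ext (Prod.ext (Setoid.ext fun _ _ => α.injective.eq_iff.trans Quotient.eq)
    (Setoid.ext fun _ _ => β.injective.eq_iff.trans Quotient.eq))

noncomputable def sigmaEquiv (A B : Type*) [Nonempty A] [Nonempty B] :
    (Σ r : FactorPair X, (Quotient r.1.1 ≃ A) × (Quotient r.1.2 ≃ B)) ≃ (X ≃ A × B) := by
  refine Equiv.ofBijective (fun r => r.1.equivProd.trans (r.2.1.prodCongr r.2.2))
    ⟨?_, fun e => ?_⟩
  · rintro ⟨r, α, β⟩ ⟨s, α', β'⟩ h
    obtain rfl : r = s := (ofEquiv_equivProd_trans r α β).symm.trans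
      ((congrArg ofEquiv h).trans (ofEquiv_equivProd_trans s α' β'))
    have hα : α = α' := Equiv.ext fun u =>
      Quotient.inductionOn u fun x => congrArg Prod.fst (Equiv.congr_fun h x)
    have hβ : β = β' := Equiv.ext fun u =>
      Quotient.inductionOn u fun x => congrArg Prod.snd (Equiv.congr_fun h x)
    rw [hα, hβ]
  · refine ⟨⟨ofEquiv e,
      Setoid.quotientKerEquivOfSurjective _ (Prod.fst_surjective.comp e.surjective),
      Setoid.quotientKerEquivOfSurjective _ (Prod.snd_surjective.comp e.surjective)⟩, ?_⟩
    ext x <;> rfl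

theorem card_card_fst_eq_mul_factorial [Finite X] {m k : ℕ} (hm : 0 < m) (hk : 0 < k)
    (hX : Nat.card X = m * k) :
    Nat.card {r : FactorPair X // Nat.card (Quotient r.1.1) = m} * (m.factorial * k.factorial) =
      (m * k).factorial := by
  have : Nonempty (Fin m) := ⟨⟨0, hm⟩⟩
  have : Nonempty (Fin k) := ⟨⟨0, hk⟩⟩
  have : Fintype {r : FactorPair X // Nat.card (Quotient r.1.1) = m} := Fintype.ofFinite _
  have card_fiber (r : {r : FactorPair X // Nat.card (Quotient r.1.1) = m}) :
      Nat.card ((Quotient r.1.1.1 ≃ Fin m) × (Quotient r.1.1.2 ≃ Fin k)) =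
        m.factorial * k.factorial := by
    have hsnd : Nat.card (Quotient r.1.1.2) = k := by
      have h := r.1.2.card_mul_card
      rw [r.2, hX] at h
      exact Nat.eq_of_mul_eq_mul_left hm h
    rw [Nat.card_prod, Nat.card_equiv_of_card_eq (by rw [r.2, Nat.card_fin]),
      Nat.card_equiv_of_card_eq (by rw [hsnd, Nat.card_fin]), Nat.card_fin, Nat.card_fin]
  calc _ = Nat.card (Σ r : {r : FactorPair X // Nat.card (Quotient r.1.1) = m},
        (Quotient r.1.1.1 ≃ Fin m) × (Quotient r.1.1.2 ≃ Fin k)) := by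
        simp only [Nat.card_sigma, card_fiber, Finset.sum_const, Finset.card_univ, smul_eq_mul,
          Nat.card_eq_fintype_card]
    _ = Nat.card (Σ r : FactorPair X, (Quotient r.1.1 ≃ Fin m) × (Quotient r.1.2 ≃ Fin k)) :=
        Nat.card_congr (Equiv.sigmaSubtypeEquivOfSubset
          (fun r : FactorPair X => (Quotient r.1.1 ≃ Fin m) × (Quotient r.1.2 ≃ Fin k)) _
          fun _ v => (Nat.card_congr v.1).trans (Nat.card_fin m))
    _ = Nat.card (X ≃ Fin m × Fin k) := Nat.card_congr (sigmaEquiv _ _)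
    _ = (m * k).factorial := by
        rw [Nat.card_equiv_of_card_eq] <;> simp [hX]

section PrimeProduct

variable [Finite X] {p q : ℕ} (hp : p.Prime) (hq : q.Prime) (hX : Nat.card X = p * q)
include hp hq hX

theorem ne_bot_and_ne_top_iff (r : FactorPair X) :
    r ≠ bot X ∧ r ≠ top X ↔
      Nat.card (Quotient r.1.1) = p ∨ Nat.card (Quotient r.1.1) = q := by
  have : Nonempty X := (Nat.card_pos_iff.1 (hX ▸ Nat.mul_pos hp.pos hq.pos)).1
  have hdvd : Nat.card (Quotient r.1.1) ∣ p * q := hX ▸ Dvd.intro _ r.2.card_mul_card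
  rw [Ne, Ne, eq_bot_iff, eq_top_iff, Setoid.eq_bot_iff_card_quotient,
    ← Setoid.card_quotient_eq_one_iff, hX]
  rcases (Nat.dvd_prime_mul_prime_iff hp hq).1 hdvd with h | h | h | h <;> rw [h] <;>
    simp [hp.ne_one, hq.ne_one, hp.one_lt.ne, hq.one_lt.ne, hp.ne_zero, hq.ne_zero]

theorem card_snd_prime {r : FactorPair X} (hr : r ≠ bot X ∧ r ≠ top X) :
    (Nat.card (Quotient r.1.2)).Prime := by
  have hperp : r.perp ≠ bot X ∧ r.perp ≠ top X :=
    ⟨fun h => hr.2 (congrArg perp h), fun h => hr.1 (congrArg perp h)⟩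
  rcases (ne_bot_and_ne_top_iff hp hq hX r.perp).1 hperp with h | h
  exacts [h ▸ hp, h ▸ hq]

theorem le_iff (r s : FactorPair X) : r.le s ↔ r = bot X ∨ s = top X ∨ r = s := by
  refine ⟨fun h => ?_, ?_⟩
  · by_contra! ⟨hr, hs, hrs⟩
    have hr' : r ≠ top X := fun h' => hs (eq_top_of_top_le (h' ▸ h))
    have hs' : s ≠ bot X := fun h' => hr (eq_bot_of_le_bot (h' ▸ h))
    exact hrs (eq_of_le_of_prime h (card_snd_prime hp hq hX ⟨hr, hr'⟩)
      (card_snd_prime hp hq hX ⟨hs', hs⟩))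
  · rintro (rfl | rfl | rfl)
    exacts [bot_le s, le_top r, le_refl r]

theorem card_ne_bot_and_ne_top_div_two :
    Nat.card {r : FactorPair X // r ≠ bot X ∧ r ≠ top X} / 2 =
      if p = q then (p * q).factorial / (2 * p.factorial * q.factorial)
      else (p * q).factorial / (p.factorial * q.factorial) := by
  classical
  have hcount := card_card_fst_eq_mul_factorial hp.pos hq.pos hX
  rw [Nat.card_congr (Equiv.subtypeEquivRight (ne_bot_and_ne_top_iff hp hq hX))]
  split_ifs with hpq
  · subst hpq
    simp only [or_self]
    rw [← hcount, mul_assoc 2,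
      Nat.mul_div_mul_right _ _ (Nat.mul_pos p.factorial_pos p.factorial_pos)]
  · have hcount' := card_card_fst_eq_mul_factorial hq.pos hp.pos (by rw [hX, mul_comm])
    rw [mul_comm q, mul_comm q.factorial, ← hcount] at hcount'
    rw [Nat.card_congr (subtypeOrEquiv _ _ fun _ hf hg r hr =>
        hpq ((hf r hr).symm.trans (hg r hr))), Nat.card_sum,
      Nat.eq_of_mul_eq_mul_right (by positivity) hcount', ← hcount,
      Nat.mul_div_cancel _ (by positivity)]
    omega

end PrimeProduct

end FactorPair

theorem stmt_15_general {X : Type*} [Fintype X] (p q : ℕ) (hp : p.Prime) (hq : q.Prime)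
    (hX : Fintype.card X = p * q) :
    ∃ e : FactorPair X ≃
        MO (if p = q then (p * q).factorial / (2 * p.factorial * q.factorial)
            else (p * q).factorial / (p.factorial * q.factorial)),
      (∀ r s : FactorPair X, FactorPair.le r s ↔ MO.le (e r) (e s)) ∧
      (∀ r : FactorPair X, e (FactorPair.perp r) = MO.perp (e r)) := by
  have hcard : Nat.card X = p * q := by rw [Nat.card_eq_fintype_card, hX]
  have : Nontrivial X :=
    Fintype.one_lt_card_iff_nontrivial.1 (hX ▸ one_lt_mul'' hp.one_lt hq.one_lt)
  rw [← FactorPair.card_ne_bot_and_ne_top_div_two hp hq hcard]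
  obtain ⟨e, he_bot, he_top, he_perp⟩ :=
    MO.exists_equiv FactorPair.perp_involutive FactorPair.perp_ne_self (FactorPair.bot X)
  refine ⟨e, fun r s => ?_, he_perp⟩
  rw [FactorPair.le_iff hp hq hcard, MO.le_iff, ← he_bot, ← he_top, e.apply_eq_iff_eq,
    e.apply_eq_iff_eq, e.apply_eq_iff_eq]

theorem stmt_15 {X : Type*} [Fintype X] (p q : ℕ) (hp : p.Prime) (hq : q.Prime)
    (hp3 : 3 ≤ p) (hX : Fintype.card X = p * q) :
    ∃ e : FactorPair X ≃
        MO (if p = q then (p * q).factorial / (2 * p.factorial * q.factorial)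
            else (p * q).factorial / (p.factorial * q.factorial)),
      (∀ r s : FactorPair X, FactorPair.le r s ↔ MO.le (e r) (e s)) ∧
      (∀ r : FactorPair X, e (FactorPair.perp r) = MO.perp (e r)) :=
  stmt_15_general p q hp hq hX
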